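/- Consider the value iteration sequence for a fixed (rewarded) Markov chain: $V_0 \equiv 0$ and $V_{i+1}(s) = r(s) + \int_{\mathcal{S}} V_i(s')\,p(s,ds')$, where $r: \mathcal{S} \to [0,1]$ is bounded measurable and $p$ is a transition kernel on $\mathcal{S}$ satisfying: the $m^\star$-step kernel satisfies $\|p^{(m^\star)}(s,\cdot) - p^{(m^\star)}(s',\cdot)\|_{TV} \leq 2\alpha$ for all $s,s'$ and some $\alpha \in (0,1)$. Then for all $i \in \mathbb{N}$, $\mathrm{span}(V_i) \leq \mathrm{span}(r)\,(m^\star + 1)\,\frac{2-\alpha}{1-\alpha}$. -/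

import Mathlib

open MeasureTheory

/-- Total variation norm of the difference of two measures. -/
noncomputable def tvDist {S : Type*} [MeasurableSpace S] (μ ν : Measure S) : ℝ :=
  sSup {x : ℝ | ∃ (n : ℕ) (B : Fin n → Set S), (∀ i, MeasurableSet (B i)) ∧
    (Pairwise fun i j => Disjoint (B i) (B j)) ∧ (⋃ i, B i) = Set.univ ∧
    x = ∑ i, |(μ (B i)).toReal - (ν (B i)).toReal|}

/-- The `m`-step transition law of the Markov chain with one-step kernel `p`, started at `s`. -/
noncomputable def stepDist {S : Type*} [MeasurableSpace S] (p : S → Measure S) :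
    ℕ → S → Measure S
  | 0, s => Measure.dirac s
  | n + 1, s => (stepDist p n s).bind p

/-- The span of a real-valued function: `sup v - inf v`. -/
noncomputable def spanF {Z : Type*} (v : Z → ℝ) : ℝ :=
  sSup (Set.range v) - sInf (Set.range v)

open ProbabilityTheory Set Finset Function

/-! Unrolling the recursion gives `Vᵢ = ∑_{k<i} Pᵏ r`. If `g` oscillates by at most `D`, the
layer-cake formula writes `∫ g dμ - ∫ g dν` as an integral over levels `t ∈ (0, D]` of
`μ {g ≥ t} - ν {g ≥ t} ≤ ‖μ - ν‖_TV / 2`, so the `m⋆`-step kernel contracts oscillations by `α`.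
Hence `Pᵏ r` oscillates by at most `α ^ ⌊k / m⋆⌋ span(r)`, and summing the blocks of length `m⋆`
gives `span(Vᵢ) ≤ m⋆ span(r) / (1 - α)`. -/

lemma sum_range_pow_div_le {α : ℝ} (h0 : 0 ≤ α) (h1 : α < 1) {m : ℕ} (hm : 0 < m) (i : ℕ) :
    ∑ k ∈ range i, α ^ (k / m) ≤ m / (1 - α) := by
  have hblock (q : ℕ) : ∑ k ∈ range (m * q), α ^ (k / m) = m * ∑ j ∈ range q, α ^ j := by
    induction q with
    | zero => simp
    | succ q ih =>
      have hconst : ∀ t ∈ range m, α ^ ((m * q + t) / m) = α ^ q := fun t ht => by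
        rw [Nat.mul_add_div hm, Nat.div_eq_of_lt (mem_range.1 ht), add_zero]
      rw [Nat.mul_succ, sum_range_add, ih, sum_congr rfl hconst, sum_range_succ]
      simp [mul_add]
  calc ∑ k ∈ range i, α ^ (k / m)
      ≤ ∑ k ∈ range (m * i), α ^ (k / m) :=
        sum_le_sum_of_subset_of_nonneg (range_subset_range.2 (Nat.le_mul_of_pos_left i hm))
          fun _ _ _ => pow_nonneg h0 _
    _ = m * ∑ j ∈ range i, α ^ j := hblock i
    _ ≤ m * (1 / (1 - α)) := by
      refine mul_le_mul_of_nonneg_left ?_ m.cast_nonneg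
      have := geom_sum_Ico_le_of_lt_one (m := 0) (n := i) h0 h1
      rwa [← range_eq_Ico, pow_zero] at this
    _ = m / (1 - α) := mul_one_div _ _

lemma spanF_le_of_forall_sub_le {Z : Type*} [Nonempty Z] {v : Z → ℝ} {D : ℝ}
    (h : ∀ x y, v x - v y ≤ D) : spanF v ≤ D := by
  rw [spanF, sub_le_iff_le_add]
  refine csSup_le (range_nonempty v) ?_
  rintro _ ⟨x, rfl⟩
  rw [← sub_le_iff_le_add']
  exact le_csInf (range_nonempty v) (by rintro _ ⟨y, rfl⟩; linarith [h x y])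

lemma sub_le_spanF {Z : Type*} {v : Z → ℝ} (ha : BddAbove (range v)) (hb : BddBelow (range v))
    (x y : Z) : v x - v y ≤ spanF v :=
  sub_le_sub (le_csSup ha ⟨x, rfl⟩) (csInf_le hb ⟨y, rfl⟩)

section TotalVariation

variable {S : Type*} [MeasurableSpace S] {μ ν : Measure S}

lemma sum_abs_sub_le_measureReal_univ [IsFiniteMeasure μ] [IsFiniteMeasure ν] {n : ℕ}
    {B : Fin n → Set S} (hB : ∀ i, MeasurableSet (B i)) (hd : Pairwise (Disjoint on B))
    (hu : ⋃ i, B i = univ) :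
    ∑ i, |μ.real (B i) - ν.real (B i)| ≤ μ.real univ + ν.real univ := by
  rw [← hu, measureReal_iUnion_fintype hd hB, measureReal_iUnion_fintype hd hB,
    ← sum_add_distrib]
  refine sum_le_sum fun i _ => abs_sub_le_iff.2 ⟨?_, ?_⟩ <;>
    linarith [measureReal_nonneg (μ := μ) (s := B i), measureReal_nonneg (μ := ν) (s := B i)]

lemma tvDist_le_measureReal_univ_add [IsFiniteMeasure μ] [IsFiniteMeasure ν] :
    tvDist μ ν ≤ μ.real univ + ν.real univ := by
  refine csSup_le ⟨_, 1, fun _ => univ, fun _ => MeasurableSet.univ,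
    Subsingleton.pairwise, iUnion_const _, rfl⟩ ?_
  rintro _ ⟨n, B, hB, hd, hu, rfl⟩
  exact sum_abs_sub_le_measureReal_univ hB hd hu

lemma tvDist_le_two [IsProbabilityMeasure μ] [IsProbabilityMeasure ν] : tvDist μ ν ≤ 2 := by
  simpa [one_add_one_eq_two] using tvDist_le_measureReal_univ_add (μ := μ) (ν := ν)

lemma sum_abs_sub_le_tvDist [IsFiniteMeasure μ] [IsFiniteMeasure ν] {n : ℕ}
    {B : Fin n → Set S} (hB : ∀ i, MeasurableSet (B i)) (hd : Pairwise (Disjoint on B))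
    (hu : ⋃ i, B i = univ) :
    ∑ i, |μ.real (B i) - ν.real (B i)| ≤ tvDist μ ν := by
  refine le_csSup ⟨μ.real univ + ν.real univ, ?_⟩ ⟨n, B, hB, hd, hu, rfl⟩
  rintro _ ⟨n, B, hB, hd, hu, rfl⟩
  exact sum_abs_sub_le_measureReal_univ hB hd hu

lemma two_mul_abs_sub_le_tvDist [IsProbabilityMeasure μ] [IsProbabilityMeasure ν] {B : Set S}
    (hB : MeasurableSet B) : 2 * |μ.real B - ν.real B| ≤ tvDist μ ν := by
  have hd : Pairwise (Disjoint on ![B, Bᶜ]) := by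
    intro i j hij
    fin_cases i <;> fin_cases j <;> simp_all [onFun, disjoint_compl_right, disjoint_compl_left]
  have h := sum_abs_sub_le_tvDist (μ := μ) (ν := ν) (B := ![B, Bᶜ])
    (by simp [Fin.forall_fin_two, hB]) hd (by ext x; simp [Fin.exists_fin_two, em])
  rw [Fin.sum_univ_two] at h
  simp only [Matrix.cons_val_zero, Matrix.cons_val_one, probReal_compl_eq_one_sub hB] at h
  rwa [show 1 - μ.real B - (1 - ν.real B) = -(μ.real B - ν.real B) by ring, abs_neg,
    ← two_mul] at h

lemma measureReal_sub_le_of_tvDist_le [IsProbabilityMeasure μ] [IsProbabilityMeasure ν]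
    {β : ℝ} (htv : tvDist μ ν ≤ 2 * β) {B : Set S} (hB : MeasurableSet B) :
    μ.real B - ν.real B ≤ β := by
  linarith [two_mul_abs_sub_le_tvDist (μ := μ) (ν := ν) hB, le_abs_self (μ.real B - ν.real B)]

lemma integral_sub_integral_le_of_tvDist_le_of_nonneg [IsProbabilityMeasure μ]
    [IsProbabilityMeasure ν] {β : ℝ} (htv : tvDist μ ν ≤ 2 * β) {g : S → ℝ}
    (hg : Measurable g) {M : ℝ} (hg0 : ∀ s, 0 ≤ g s) (hgM : ∀ s, g s ≤ M) :
    ∫ s, g s ∂μ - ∫ s, g s ∂ν ≤ M * β := by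
  obtain ⟨s₀⟩ := nonempty_of_isProbabilityMeasure μ
  have hM : 0 ≤ M := (hg0 s₀).trans (hgM s₀)
  have hlayer (ρ : Measure S) [IsProbabilityMeasure ρ] :
      ∫ s, g s ∂ρ = ∫ t in Ioc 0 M, ρ.real {s | t ≤ g s} := by
    refine Integrable.integral_eq_integral_Ioc_meas_le ?_ (ae_of_all _ hg0) (ae_of_all _ hgM)
    exact .of_bound hg.aestronglyMeasurable M
      (ae_of_all _ fun s => (abs_of_nonneg (hg0 s)).trans_le (hgM s))
  have hint (ρ : Measure S) [IsProbabilityMeasure ρ] :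
      IntegrableOn (fun t => ρ.real {s | t ≤ g s}) (Ioc 0 M) :=
    (Antitone.intervalIntegrable (u := fun t => ρ.real {s | t ≤ g s}) fun _ _ h =>
      measureReal_mono fun _ hs => h.trans hs).1
  rw [hlayer μ, hlayer ν, ← integral_sub (hint μ) (hint ν)]
  calc ∫ t in Ioc 0 M, (μ.real {s | t ≤ g s} - ν.real {s | t ≤ g s})
      ≤ ∫ _ in Ioc 0 M, β :=
        setIntegral_mono_on ((hint μ).sub (hint ν)) (integrableOn_const measure_Ioc_lt_top.ne)
          measurableSet_Ioc fun t _ =>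
            measureReal_sub_le_of_tvDist_le htv (measurableSet_le measurable_const hg)
    _ = M * β := by rw [setIntegral_const, Real.volume_real_Ioc_of_le hM, sub_zero, smul_eq_mul]

lemma integral_sub_integral_le_of_tvDist_le [IsProbabilityMeasure μ] [IsProbabilityMeasure ν]
    {β : ℝ} (htv : tvDist μ ν ≤ 2 * β) {g : S → ℝ} (hg : Measurable g) {D : ℝ}
    (hD : ∀ x y, g x - g y ≤ D) :
    ∫ s, g s ∂μ - ∫ s, g s ∂ν ≤ D * β := by
  obtain ⟨s₀⟩ := nonempty_of_isProbabilityMeasure μ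
  set a := sInf (range g)
  have hbdd : BddBelow (range g) := ⟨g s₀ - D, by rintro _ ⟨y, rfl⟩; linarith [hD s₀ y]⟩
  have ha (x : S) : a ≤ g x := csInf_le hbdd ⟨x, rfl⟩
  have haD (x : S) : g x ≤ a + D :=
    sub_le_iff_le_add.1 (le_csInf ⟨g x, x, rfl⟩ (by rintro _ ⟨y, rfl⟩; linarith [hD x y]))
  have hshift := integral_sub_integral_le_of_tvDist_le_of_nonneg htv (hg.sub_const a)
    (fun x => sub_nonneg.2 (ha x)) (fun x => sub_le_iff_le_add'.2 (haD x))
  have hgint (ρ : Measure S) [IsProbabilityMeasure ρ] : Integrable g ρ :=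
    .of_bound hg.aestronglyMeasurable (|a| + D) <| ae_of_all _ fun x => abs_le.2
      ⟨by linarith [neg_abs_le a, ha x, hD x x], by linarith [le_abs_self a, haD x]⟩
  rw [integral_sub (hgint μ) (integrable_const a), integral_sub (hgint ν) (integrable_const a)]
    at hshift
  simpa using hshift

end TotalVariation

namespace ProbabilityTheory.Kernel

variable {S : Type*} [MeasurableSpace S]

lemma pow_zero_apply (κ : Kernel S S) (s : S) : (κ ^ 0) s = Measure.dirac s := by
  rw [pow_zero]
  exact id_apply s

instance isMarkovKernel_pow (κ : Kernel S S) [IsMarkovKernel κ] : ∀ n, IsMarkovKernel (κ ^ n)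
  | 0 => by rw [pow_zero]; exact inferInstanceAs (IsMarkovKernel Kernel.id)
  | n + 1 => by
    have := isMarkovKernel_pow κ n
    rw [pow_succ]
    exact inferInstanceAs (IsMarkovKernel ((κ ^ n) ∘ₖ κ))

end ProbabilityTheory.Kernel

section ValueIteration

variable {S : Type*} [MeasurableSpace S]

lemma stepDist_eq_pow (κ : Kernel S S) : ∀ n, stepDist κ n = ⇑(κ ^ n)
  | 0 => funext fun s => (Kernel.pow_zero_apply κ s).symm
  | n + 1 => by
    ext1 s
    rw [stepDist, stepDist_eq_pow κ n, pow_succ']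
    rfl

noncomputable def expectedReward (κ : Kernel S S) (r : S → ℝ) (k : ℕ) (s : S) : ℝ :=
  ∫ x, r x ∂(κ ^ k) s

variable (κ : Kernel S S) {r : S → ℝ}

lemma measurable_expectedReward (hr : Measurable r) (k : ℕ) :
    Measurable (expectedReward κ r k) :=
  (hr.stronglyMeasurable.integral_kernel).measurable

lemma norm_expectedReward_le [IsMarkovKernel κ] {C : ℝ} (hC : ∀ s, ‖r s‖ ≤ C) (k : ℕ) (s : S) :
    ‖expectedReward κ r k s‖ ≤ C := by
  simpa [expectedReward] using
    norm_integral_le_of_norm_le_const (μ := (κ ^ k) s) (ae_of_all _ hC)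

lemma expectedReward_zero (hr : Measurable r) (s : S) : expectedReward κ r 0 s = r s := by
  rw [expectedReward, Kernel.pow_zero_apply, integral_dirac' r s hr.stronglyMeasurable]

lemma expectedReward_add [IsMarkovKernel κ] (hr : Measurable r) {C : ℝ} (hC : ∀ s, ‖r s‖ ≤ C)
    (m n : ℕ) (s : S) :
    expectedReward κ r (m + n) s = ∫ x, expectedReward κ r n x ∂(κ ^ m) s := by
  rw [expectedReward, add_comm, Kernel.pow_add, Kernel.integral_comp]
  · rfl
  · exact .of_bound hr.aestronglyMeasurable C (ae_of_all _ hC)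

lemma value_iteration_eq_sum [IsMarkovKernel κ] (hr : Measurable r) {C : ℝ}
    (hC : ∀ s, ‖r s‖ ≤ C) {V : ℕ → S → ℝ} (hV0 : ∀ s, V 0 s = 0)
    (hVrec : ∀ i s, V (i + 1) s = r s + ∫ x, V i x ∂κ s) (i : ℕ) (s : S) :
    V i s = ∑ k ∈ range i, expectedReward κ r k s := by
  induction i generalizing s with
  | zero => simp [hV0]
  | succ i ih =>
    have hint (k : ℕ) : Integrable (expectedReward κ r k) (κ s) :=
      .of_bound (measurable_expectedReward κ hr k).aestronglyMeasurable C
        (ae_of_all _ (norm_expectedReward_le κ hC k))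
    simp_rw [hVrec, ih]
    rw [integral_finsetSum _ fun k _ => hint k, sum_range_succ', expectedReward_zero κ hr,
      add_comm]
    refine congrArg (· + r s) (sum_congr rfl fun k _ => ?_)
    rw [add_comm k 1, expectedReward_add κ hr hC, pow_one]

lemma expectedReward_sub_le [IsMarkovKernel κ] (hr : Measurable r) {C : ℝ}
    (hC : ∀ s, ‖r s‖ ≤ C) {m : ℕ} {α : ℝ}
    (hcontra : ∀ s s', tvDist ((κ ^ m) s) ((κ ^ m) s') ≤ 2 * α) {D : ℝ}
    (hD : ∀ x y, r x - r y ≤ D) (k : ℕ) (s s' : S) :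
    expectedReward κ r k s - expectedReward κ r k s' ≤ α ^ (k / m) * D := by
  have hblock (q j : ℕ) (s s' : S) :
      expectedReward κ r (m * q + j) s - expectedReward κ r (m * q + j) s' ≤ α ^ q * D := by
    induction q generalizing s s' with
    | zero =>
      rw [mul_zero, zero_add, pow_zero, one_mul, ← mul_one D]
      exact integral_sub_integral_le_of_tvDist_le (by simpa using tvDist_le_two) hr hD
    | succ q ih =>
      rw [show m * (q + 1) + j = m + (m * q + j) by ring, expectedReward_add κ hr hC,
        expectedReward_add κ hr hC, pow_succ, mul_right_comm]
      exact integral_sub_integral_le_of_tvDist_le (hcontra s s')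
        (measurable_expectedReward κ hr _) ih
  have := hblock (k / m) (k % m) s s'
  rwa [Nat.div_add_mod] at this

end ValueIteration

theorem stmt8 {S : Type*} [MeasurableSpace S] [Nonempty S] (p : S → Measure S)
    (hp : ∀ s, IsProbabilityMeasure (p s)) (hmp : Measurable p)
    (r : S → ℝ) (hr : Measurable r) (hr01 : ∀ s, r s ∈ Set.Icc (0 : ℝ) 1)
    (mstar : ℕ) (hms : 0 < mstar) (α : ℝ) (hα : α ∈ Set.Ioo (0 : ℝ) 1)
    (hcontra : ∀ s s', tvDist (stepDist p mstar s) (stepDist p mstar s') ≤ 2 * α)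
    (V : ℕ → S → ℝ) (hV0 : ∀ s, V 0 s = 0)
    (hVrec : ∀ i s, V (i + 1) s = r s + ∫ s', V i s' ∂(p s)) :
    ∀ i : ℕ, spanF (V i) ≤ spanF r * (mstar + 1) * (2 - α) / (1 - α) := by
  intro i
  let κ : Kernel S S := ⟨p, hmp⟩
  have : IsMarkovKernel κ := ⟨hp⟩
  have hκ (s s' : S) : tvDist ((κ ^ mstar) s) ((κ ^ mstar) s') ≤ 2 * α := by
    rw [← stepDist_eq_pow]
    exact hcontra s s'
  have hrC (s : S) : ‖r s‖ ≤ 1 := abs_le.2 ⟨by linarith [(hr01 s).1], (hr01 s).2⟩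
  have hrspan := sub_le_spanF (v := r) ⟨1, by rintro _ ⟨s, rfl⟩; exact (hr01 s).2⟩
    ⟨0, by rintro _ ⟨s, rfl⟩; exact (hr01 s).1⟩
  have hspan_nonneg : 0 ≤ spanF r := by
    obtain ⟨s⟩ := ‹Nonempty S›
    simpa using hrspan s s
  calc spanF (V i)
      ≤ (∑ k ∈ range i, α ^ (k / mstar)) * spanF r := by
        refine spanF_le_of_forall_sub_le fun s s' => ?_
        rw [value_iteration_eq_sum κ hr hrC hV0 hVrec, value_iteration_eq_sum κ hr hrC hV0 hVrec,
          ← sum_sub_distrib, sum_mul]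
        exact sum_le_sum fun k _ => expectedReward_sub_le κ hr hrC hκ hrspan k s s'
    _ ≤ mstar / (1 - α) * spanF r := by
      gcongr
      exact sum_range_pow_div_le hα.1.le hα.2 hms i
    _ ≤ spanF r * (mstar + 1) * (2 - α) / (1 - α) := by
      rw [div_mul_eq_mul_div]
      refine div_le_div_of_nonneg_right ?_ (by linarith [hα.2])
      nlinarith [hα.2, mul_nonneg hspan_nonneg (sub_nonneg.2 hα.2.le)]
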